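/- arXiv:1602.05156 — 4 statements merged into one kernel-verified Lean document; each statement's English description precedes it below -/
import Mathlib

section
/- Let (G, ω₀, ω₁) be a cat¹-group. Set C₁ = ker ω₀, C₀ = im ω₀, and let ∂ : C₁ → C₀ be the restriction of ω₁ to ker ω₀ (note ω₁(ker ω₀) ⊆ im ω₀ since ω₀∘ω₁ = ω₁ implies im ω₁ ⊆ im ω₀). With C₀ acting on C₁ by conjugation, (C₁, C₀, ∂) is a crossed module of groups. -/
/-- From a cat¹-group `(G, ω₀, ω₁)`, setting `C₁ = ker ω₀`, `C₀ = im ω₀`,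
`∂ = ω₁|_{ker ω₀}` and letting `C₀` act on `C₁` by conjugation gives a crossed module:
`ω₁` maps `ker ω₀` into `im ω₀`, conjugation by `im ω₀` preserves `ker ω₀`,
`∂` is equivariant, and the Peiffer identity holds. -/
theorem cat1Group_to_crossedModule {G : Type*} [Group G] (ω₀ ω₁ : G →* G)
    (h01 : ω₀.comp ω₁ = ω₁) (h10 : ω₁.comp ω₀ = ω₀)
    (hker : ∀ x ∈ ω₀.ker, ∀ y ∈ ω₁.ker, Commute x y) :
    (∀ c ∈ ω₀.ker, ω₁ c ∈ ω₀.range) ∧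
    (∀ g ∈ ω₀.range, ∀ c ∈ ω₀.ker, g * c * g⁻¹ ∈ ω₀.ker) ∧
    (∀ g ∈ ω₀.range, ∀ c ∈ ω₀.ker, ω₁ (g * c * g⁻¹) = g * ω₁ c * g⁻¹) ∧
    (∀ c ∈ ω₀.ker, ∀ c' ∈ ω₀.ker, ω₁ c * c' * (ω₁ c)⁻¹ = c * c' * c⁻¹) := by
  have h01' : ∀ x : G, ω₀ (ω₁ x) = ω₁ x := fun x => DFunLike.congr_fun h01 x
  have h10' : ∀ x : G, ω₁ (ω₀ x) = ω₀ x := fun x => DFunLike.congr_fun h10 x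
  refine ⟨fun c _ => ⟨ω₁ c, h01' c⟩, ?_, ?_, ?_⟩
  · intro g hg c hc
    rw [MonoidHom.mem_ker] at hc ⊢
    simp [hc]
  · rintro g ⟨x, rfl⟩ c _
    simp only [map_mul, map_inv, h10']
  · intro c hc c' hc'
    have hidem : ∀ x : G, ω₁ (ω₁ x) = ω₁ x := fun x => by
      rw [← h01' x, h10', h01']
    have hmem : c⁻¹ * ω₁ c ∈ ω₁.ker := by
      rw [MonoidHom.mem_ker, map_mul, map_inv, hidem, inv_mul_cancel]
    have hcomm := hker c' hc' _ hmem
    have : ω₁ c * c' * (ω₁ c)⁻¹ = c * ((c⁻¹ * ω₁ c) * c' * (c⁻¹ * ω₁ c)⁻¹) * c⁻¹ := by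
      group
    rw [this, hcomm.symm.eq, mul_inv_cancel_right]
end

section
/- Let ∂ : C₁ → C₀ be a crossed module of groups. Form the semidirect product G = C₁ ⋊ C₀ with respect to the action of C₀ on C₁, and define ω₀, ω₁ : G → G by ω₀(c₁, c₀) = (1, c₀) and ω₁(c₁, c₀) = (1, ∂(c₁) c₀). Then ω₀ and ω₁ are group homomorphisms satisfying ω₀∘ω₁ = ω₁ and ω₁∘ω₀ = ω₀, and every element of ker ω₀ commutes with every element of ker ω₁; that is, (G, ω₀, ω₁) is a cat¹-group. -/
/-- From a crossed module of groups `d : C₁ →* C₀` (with action `φ`),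
the semidirect product `G = C₁ ⋊[φ] C₀` with `ω₀(c₁, c₀) = (1, c₀)` and
`ω₁(c₁, c₀) = (1, d(c₁) * c₀)` is a cat¹-group: `ω₀, ω₁` are homomorphisms with
`ω₀ ∘ ω₁ = ω₁`, `ω₁ ∘ ω₀ = ω₀`, and `[ker ω₀, ker ω₁] = 1`. -/
theorem crossedModule_to_cat1Group {C₁ C₀ : Type*} [Group C₁] [Group C₀]
    (φ : C₀ →* MulAut C₁) (d : C₁ →* C₀)
    (heq : ∀ (g : C₀) (c : C₁), d (φ g c) = g * d c * g⁻¹)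
    (hpe : ∀ c c' : C₁, φ (d c) c' = c * c' * c⁻¹)
    (ω₀ ω₁ : C₁ ⋊[φ] C₀ → C₁ ⋊[φ] C₀)
    (hω₀ : ω₀ = fun x => ⟨1, x.right⟩)
    (hω₁ : ω₁ = fun x => ⟨1, d x.left * x.right⟩) :
    (∀ x y, ω₀ (x * y) = ω₀ x * ω₀ y) ∧
    (∀ x y, ω₁ (x * y) = ω₁ x * ω₁ y) ∧
    (∀ x, ω₀ (ω₁ x) = ω₁ x) ∧
    (∀ x, ω₁ (ω₀ x) = ω₀ x) ∧
    (∀ x y, ω₀ x = 1 → ω₁ y = 1 → Commute x y) := by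
  subst hω₀ hω₁
  refine ⟨?_, ?_, ?_, ?_, ?_⟩
  · intro x y
    ext <;> simp [SemidirectProduct.mul_left, SemidirectProduct.mul_right]
  · intro x y
    ext
    · simp [SemidirectProduct.mul_left]
    · simp only [SemidirectProduct.mul_left, SemidirectProduct.mul_right, map_mul, heq]
      group
  · intro x; simp
  · intro x; simp
  · intro x y hx hy
    have hxr : x.right = 1 := congrArg SemidirectProduct.right hx
    have hyr : d y.left * y.right = 1 := congrArg SemidirectProduct.right hy
    have hyr' : y.right = (d y.left)⁻¹ := eq_inv_of_mul_eq_one_right hyr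
    unfold Commute SemiconjBy
    ext
    · rw [SemidirectProduct.mul_left, SemidirectProduct.mul_left, hxr, hyr', map_one,
        MulAut.one_apply, map_inv]
      have h := hpe y.left ((φ (d y.left))⁻¹ x.left)
      rw [MulAut.apply_inv_self] at h
      conv_lhs => rw [h]
      group
    · simp [SemidirectProduct.mul_right, hxr]
end

section
/- Let L be a Lie algebra and ω₀, ω₁ : L → L be Lie algebra endomorphisms with ω₀∘ω₁ = ω₁ and ω₁∘ω₀ = ω₀, and suppose [x, y] = 0 for all x ∈ ker ω₀, y ∈ ker ω₁ (a cat¹-Lie algebra). Then the map ∂ = ω₁|_{ker ω₀} : ker ω₀ → im ω₀ together with the adjoint action of im ω₀ on ker ω₀ (c₀ · c₁ = [c₀, c₁]) defines a crossed module of Lie algebras: ∂([c₀, c₁]) = [c₀, ∂(c₁)] and [∂(c₁), c₁'] = [c₁, c₁'] for all c₀ ∈ im ω₀, c₁, c₁' ∈ ker ω₀. -/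
/-- For a cat¹-Lie algebra `(L, ω₀, ω₁)`, the restriction
`∂ = ω₁|_{ker ω₀} : ker ω₀ → im ω₀`, with `im ω₀` acting on `ker ω₀` by the adjoint
action `c₀ · c₁ = ⁅c₀, c₁⁆`, is a crossed module of Lie algebras: `ω₁(ker ω₀) ⊆ im ω₀`,
the bracket restricts to an action, `∂⁅c₀, c₁⁆ = ⁅c₀, ∂ c₁⁆`, and `⁅∂ c₁, c₁'⁆ = ⁅c₁, c₁'⁆`. -/
theorem cat1Lie_to_crossedModule {R L : Type*} [CommRing R] [LieRing L] [LieAlgebra R L]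
    (ω₀ ω₁ : L →ₗ⁅R⁆ L)
    (h01 : ∀ x, ω₀ (ω₁ x) = ω₁ x) (h10 : ∀ x, ω₁ (ω₀ x) = ω₀ x)
    (hker : ∀ x y : L, ω₀ x = 0 → ω₁ y = 0 → ⁅x, y⁆ = 0) :
    (∀ c : L, ω₀ c = 0 → ∃ x : L, ω₀ x = ω₁ c) ∧
    (∀ x c : L, ω₀ c = 0 → ω₀ ⁅ω₀ x, c⁆ = 0) ∧
    (∀ x c : L, ω₀ c = 0 → ω₁ ⁅ω₀ x, c⁆ = ⁅ω₀ x, ω₁ c⁆) ∧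
    (∀ c c' : L, ω₀ c = 0 → ω₀ c' = 0 → ⁅ω₁ c, c'⁆ = ⁅c, c'⁆) := by
  refine ⟨fun c _ => ⟨ω₁ c, h01 c⟩, fun x c hc => ?_, fun x c hc => ?_, fun c c' hc hc' => ?_⟩
  · simp [LieHom.map_lie, h01, hc]
  · simp [LieHom.map_lie, h10]
  · have key : ω₁ (ω₁ c) = ω₁ c := by
      have h := h10 (ω₁ c); rwa [h01] at h
    have h1 : ω₁ (ω₁ c - c) = 0 := by simp [key]
    have h2 := hker c' (ω₁ c - c) hc' h1
    have h3 : ⁅ω₁ c - c, c'⁆ = 0 := by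
      rw [← lie_skew, h2, neg_zero]
    rw [sub_lie, sub_eq_zero] at h3
    exact h3
end

section
/- Let ∂ : C₁ → C₀ be a crossed module of Lie algebras. Form the semidirect product Lie algebra C₁ ⋊ C₀ with bracket [(a, x), (b, y)] = ([a,b] + x·b − y·a, [x,y]), and define ω₀(a, x) = (0, x), ω₁(a, x) = (0, ∂(a) + x). Then ω₀ and ω₁ are Lie algebra homomorphisms with ω₀∘ω₁ = ω₁, ω₁∘ω₀ = ω₀, and [ker ω₀, ker ω₁] = 0. -/
/-! `source` and `target` are the maps `ω₀` and `ω₁`. Since `ω₀` kills the `C₁`-part, it respects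
the bracket for free; `ω₁` respects it because `∂` is `C₀`-equivariant. For the kernels, `p ∈ ker ω₀`
means `p = (a, 0)` and `q ∈ ker ω₁` means `q = (b, -∂b)`, so the Peiffer identity turns `[p, q]` into
`([a, b] + ∂(b)·a, 0) = ([a, b] + [b, a], 0) = 0`. -/

namespace LieCrossedModule

variable {R C₁ C₀ : Type*} [CommRing R]
  [LieRing C₁] [LieAlgebra R C₁] [LieRing C₀] [LieAlgebra R C₀]

def semidirectBracket (ρ : C₀ →ₗ[R] C₁ →ₗ[R] C₁) (p q : C₁ × C₀) : C₁ × C₀ :=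
  (⁅p.1, q.1⁆ + ρ p.2 q.1 - ρ q.2 p.1, ⁅p.2, q.2⁆)

variable (R C₁ C₀) in
def source : C₁ × C₀ →ₗ[R] C₁ × C₀ :=
  LinearMap.inr R C₁ C₀ ∘ₗ LinearMap.snd R C₁ C₀

def target (d : C₁ →ₗ⁅R⁆ C₀) : C₁ × C₀ →ₗ[R] C₁ × C₀ :=
  LinearMap.inr R C₁ C₀ ∘ₗ (d : C₁ →ₗ[R] C₀).coprod LinearMap.id

@[simp]
theorem source_apply (p : C₁ × C₀) : source R C₁ C₀ p = (0, p.2) := rfl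

@[simp]
theorem target_apply (d : C₁ →ₗ⁅R⁆ C₀) (p : C₁ × C₀) : target d p = (0, d p.1 + p.2) := rfl

theorem source_target (d : C₁ →ₗ⁅R⁆ C₀) (p : C₁ × C₀) :
    source R C₁ C₀ (target d p) = target d p := by
  simp

theorem target_source (d : C₁ →ₗ⁅R⁆ C₀) (p : C₁ × C₀) :
    target d (source R C₁ C₀ p) = source R C₁ C₀ p := by
  simp

theorem semidirectBracket_zero_zero (ρ : C₀ →ₗ[R] C₁ →ₗ[R] C₁) (x y : C₀) :
    semidirectBracket ρ (0, x) (0, y) = (0, ⁅x, y⁆) := by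
  simp [semidirectBracket]

theorem source_semidirectBracket (ρ : C₀ →ₗ[R] C₁ →ₗ[R] C₁) (p q : C₁ × C₀) :
    source R C₁ C₀ (semidirectBracket ρ p q) =
      semidirectBracket ρ (source R C₁ C₀ p) (source R C₁ C₀ q) := by
  simp only [source_apply, semidirectBracket_zero_zero]
  rfl

theorem target_semidirectBracket {d : C₁ →ₗ⁅R⁆ C₀} {ρ : C₀ →ₗ[R] C₁ →ₗ[R] C₁}
    (hd : ∀ (x : C₀) (a : C₁), d (ρ x a) = ⁅x, d a⁆) (p q : C₁ × C₀) :
    target d (semidirectBracket ρ p q) =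
      semidirectBracket ρ (target d p) (target d q) := by
  simp only [target_apply, semidirectBracket_zero_zero]
  congr 1
  simp only [semidirectBracket, map_add, map_sub, LieHom.map_lie, hd]
  rw [← lie_skew q.2 (d p.1), lie_add, add_lie, add_lie]
  abel

theorem semidirectBracket_eq_zero_of_source_eq_zero_of_target_eq_zero
    {d : C₁ →ₗ⁅R⁆ C₀} {ρ : C₀ →ₗ[R] C₁ →ₗ[R] C₁} (hpe : ∀ a b : C₁, ρ (d a) b = ⁅a, b⁆)
    {p q : C₁ × C₀} (hp : source R C₁ C₀ p = 0) (hq : target d q = 0) :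
    semidirectBracket ρ p q = 0 := by
  obtain ⟨a, x⟩ := p
  obtain ⟨b, y⟩ := q
  obtain rfl : x = 0 := (Prod.mk_eq_zero.mp hp).2
  obtain rfl : y = -d b := eq_neg_of_add_eq_zero_right (Prod.mk_eq_zero.mp hq).2
  refine Prod.ext ?_ (by simp [semidirectBracket])
  simp only [semidirectBracket, map_zero, LinearMap.zero_apply, map_neg, LinearMap.neg_apply, hpe]
  rw [← lie_skew b a, Prod.fst_zero]
  abel

end LieCrossedModule

open LieCrossedModule in
theorem crossedModule_to_cat1Lie_general {R C₁ C₀ : Type*} [CommRing R]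
    [LieRing C₁] [LieAlgebra R C₁] [LieRing C₀] [LieAlgebra R C₀]
    (d : C₁ →ₗ⁅R⁆ C₀) (ρ : C₀ →ₗ[R] C₁ →ₗ[R] C₁)
    (hd : ∀ (x : C₀) (a : C₁), d (ρ x a) = ⁅x, d a⁆)
    (hpe : ∀ a b : C₁, ρ (d a) b = ⁅a, b⁆)
    (br : C₁ × C₀ → C₁ × C₀ → C₁ × C₀)
    (hbr : br = fun p q => (⁅p.1, q.1⁆ + ρ p.2 q.1 - ρ q.2 p.1, ⁅p.2, q.2⁆))
    (ω₀ ω₁ : C₁ × C₀ → C₁ × C₀)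
    (hω₀ : ω₀ = fun p => ((0 : C₁), p.2))
    (hω₁ : ω₁ = fun p => ((0 : C₁), d p.1 + p.2)) :
    (∀ p q, ω₀ (p + q) = ω₀ p + ω₀ q) ∧
    (∀ (c : R) p, ω₀ (c • p) = c • ω₀ p) ∧
    (∀ p q, ω₀ (br p q) = br (ω₀ p) (ω₀ q)) ∧
    (∀ p q, ω₁ (p + q) = ω₁ p + ω₁ q) ∧
    (∀ (c : R) p, ω₁ (c • p) = c • ω₁ p) ∧
    (∀ p q, ω₁ (br p q) = br (ω₁ p) (ω₁ q)) ∧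
    (∀ p, ω₀ (ω₁ p) = ω₁ p) ∧
    (∀ p, ω₁ (ω₀ p) = ω₀ p) ∧
    (∀ p q, ω₀ p = 0 → ω₁ q = 0 → br p q = 0) := by
  obtain rfl : br = semidirectBracket ρ := hbr
  obtain rfl : ω₀ = source R C₁ C₀ := hω₀
  obtain rfl : ω₁ = target d := hω₁
  exact ⟨map_add _, map_smul _, source_semidirectBracket ρ, map_add _, map_smul _,
    target_semidirectBracket hd, source_target d, target_source d,
    fun _ _ => semidirectBracket_eq_zero_of_source_eq_zero_of_target_eq_zero hpe⟩

/-- From a crossed module of Lie algebras `d : C₁ → C₀` (with action `ρ`),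
the semidirect product `C₁ ⋊ C₀` with bracket
`[(a,x),(b,y)] = ([a,b] + x·b − y·a, [x,y])` and structural maps `ω₀(a,x) = (0,x)`,
`ω₁(a,x) = (0, d a + x)` is a cat¹-Lie algebra: `ω₀, ω₁` are Lie algebra homomorphisms,
`ω₀ ∘ ω₁ = ω₁`, `ω₁ ∘ ω₀ = ω₀`, and `[ker ω₀, ker ω₁] = 0`. -/
theorem crossedModule_to_cat1Lie {R C₁ C₀ : Type*} [CommRing R]
    [LieRing C₁] [LieAlgebra R C₁] [LieRing C₀] [LieAlgebra R C₀]
    (d : C₁ →ₗ⁅R⁆ C₀) (ρ : C₀ →ₗ[R] C₁ →ₗ[R] C₁)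
    (hmod : ∀ (x y : C₀) (a : C₁), ρ ⁅x, y⁆ a = ρ x (ρ y a) - ρ y (ρ x a))
    (hder : ∀ (x : C₀) (a b : C₁), ρ x ⁅a, b⁆ = ⁅ρ x a, b⁆ + ⁅a, ρ x b⁆)
    (hd : ∀ (x : C₀) (a : C₁), d (ρ x a) = ⁅x, d a⁆)
    (hpe : ∀ a b : C₁, ρ (d a) b = ⁅a, b⁆)
    (br : C₁ × C₀ → C₁ × C₀ → C₁ × C₀)
    (hbr : br = fun p q => (⁅p.1, q.1⁆ + ρ p.2 q.1 - ρ q.2 p.1, ⁅p.2, q.2⁆))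
    (ω₀ ω₁ : C₁ × C₀ → C₁ × C₀)
    (hω₀ : ω₀ = fun p => ((0 : C₁), p.2))
    (hω₁ : ω₁ = fun p => ((0 : C₁), d p.1 + p.2)) :
    (∀ p q, ω₀ (p + q) = ω₀ p + ω₀ q) ∧
    (∀ (c : R) p, ω₀ (c • p) = c • ω₀ p) ∧
    (∀ p q, ω₀ (br p q) = br (ω₀ p) (ω₀ q)) ∧
    (∀ p q, ω₁ (p + q) = ω₁ p + ω₁ q) ∧
    (∀ (c : R) p, ω₁ (c • p) = c • ω₁ p) ∧
    (∀ p q, ω₁ (br p q) = br (ω₁ p) (ω₁ q)) ∧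
    (∀ p, ω₀ (ω₁ p) = ω₁ p) ∧
    (∀ p, ω₁ (ω₀ p) = ω₀ p) ∧
    (∀ p q, ω₀ p = 0 → ω₁ q = 0 → br p q = 0) :=
  crossedModule_to_cat1Lie_general d ρ hd hpe br hbr ω₀ ω₁ hω₀ hω₁
end
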